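/- arXiv:2401.07223 — 7 statements merged into one kernel-verified Lean document; each statement's English description precedes it below -/
import Mathlib

section
/- For the complete graph K_n on n vertices with a fixed vertex v, the number of functions f : V(K_n) → ℤ with f(v) = 0 and |f(x) - f(y)| ≤ h for all pairs x ≠ y equals (h+1)^n - h^n. -/
/-!
Subtracting a constant preserves the Lipschitz condition, so normalising by the minimum instead
of by the value at the root identifies rooted `h`-Lipschitz functions with functions whose least
value is `0`. On the complete graph such a function is `h`-Lipschitz exactly when all its values
are at most `h`, so these are the functions `V → [0, h]` that are not `V → [1, h]`, and there are
`(h + 1) ^ n - h ^ n` of them, where `n = |V|`.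
-/

open Finset Function

section

variable {V : Type*}

def IsLipschitzOnComplete (h : ℕ) (f : V → ℤ) : Prop :=
  ∀ x y : V, x ≠ y → |f x - f y| ≤ (h : ℤ)

theorem isLipschitzOnComplete_sub_const_iff {h : ℕ} {f : V → ℤ} (c : ℤ) :
    IsLipschitzOnComplete h (f - const V c) ↔ IsLipschitzOnComplete h f := by
  simp only [IsLipschitzOnComplete, Pi.sub_apply, const_apply, sub_sub_sub_cancel_right]

theorem isLipschitzOnComplete_iff_le_of_isLeast {h : ℕ} {g : V → ℤ} {a : ℤ}
    (hg : IsLeast (Set.range g) a) : IsLipschitzOnComplete h g ↔ ∀ x, g x ≤ a + h := by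
  obtain ⟨⟨x₀, hx₀⟩, hge⟩ := hg
  rw [mem_lowerBounds, Set.forall_mem_range] at hge
  constructor
  · intro hlip x
    rcases eq_or_ne x x₀ with rfl | hx
    · omega
    · have := (abs_le.mp (hlip x x₀ hx)).2
      omega
  · intro hle x y _
    have := hge x; have := hge y; have := hle x; have := hle y
    exact abs_le.mpr ⟨by omega, by omega⟩

theorem isLeast_range_inf' [Fintype V] [Nonempty V] (f : V → ℤ) :
    IsLeast (Set.range f) (univ.inf' univ_nonempty f) := by
  obtain ⟨x, -, hx⟩ := exists_mem_eq_inf' univ_nonempty f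
  exact ⟨⟨x, hx.symm⟩, Set.forall_mem_range.mpr fun y => inf'_le f (mem_univ y)⟩

theorem isLeast_range_sub_const {f : V → ℤ} {a : ℤ} (hf : IsLeast (Set.range f) a) (c : ℤ) :
    IsLeast (Set.range (f - const V c)) (a - c) := by
  obtain ⟨⟨x, rfl⟩, hge⟩ := hf
  rw [mem_lowerBounds, Set.forall_mem_range] at hge
  exact ⟨⟨x, rfl⟩, Set.forall_mem_range.mpr fun y => sub_le_sub_right (hge y) c⟩

noncomputable def rootedEquivMinZero [Fintype V] (v : V) (P : (V → ℤ) → Prop)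
    (hP : ∀ f c, P (f - const V c) ↔ P f) :
    {f : V → ℤ // f v = 0 ∧ P f} ≃ {g : V → ℤ // IsLeast (Set.range g) 0 ∧ P g} :=
  haveI : Nonempty V := ⟨v⟩
  { toFun := fun f => ⟨f.1 - const V (univ.inf' univ_nonempty f.1),
      by simpa using isLeast_range_sub_const (isLeast_range_inf' f.1) (univ.inf' univ_nonempty f.1),
      (hP _ _).mpr f.2.2⟩
    invFun := fun g => ⟨g.1 - const V (g.1 v), by simp, (hP _ _).mpr g.2.2⟩
    left_inv := fun f => by
      ext x
      simp [f.2.1]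
    right_inv := fun g => by
      have hmin : univ.inf' univ_nonempty (g.1 - const V (g.1 v)) = -g.1 v :=
        (isLeast_range_inf' _).unique (by simpa using isLeast_range_sub_const g.2.1 (g.1 v))
      ext x
      simp [hmin] }

theorem isLeast_range_and_le_iff_mem_piFinset [Fintype V] [DecidableEq V] {g : V → ℤ}
    {a b : ℤ} : (IsLeast (Set.range g) a ∧ ∀ x, g x ≤ b) ↔
      g ∈ Fintype.piFinset (fun _ => Icc a b) \ Fintype.piFinset (fun _ => Icc (a + 1) b) := by
  simp only [mem_sdiff, Fintype.mem_piFinset, mem_Icc, not_forall]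
  constructor
  · rintro ⟨⟨⟨x, rfl⟩, hge⟩, hle⟩
    exact ⟨fun y => ⟨hge ⟨y, rfl⟩, hle y⟩, x, by omega⟩
  · rintro ⟨hmem, x, hx⟩
    refine ⟨⟨⟨x, ?_⟩, ?_⟩, fun y => (hmem y).2⟩
    · have := hmem x; omega
    · rintro _ ⟨y, rfl⟩
      exact (hmem y).1

theorem card_isLeast_range_zero_and_le [Fintype V] (h : ℕ) :
    Nat.card {g : V → ℤ // IsLeast (Set.range g) 0 ∧ ∀ x, g x ≤ h} =
      (h + 1) ^ Fintype.card V - h ^ Fintype.card V := by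
  classical
  rw [Nat.card_congr (Equiv.subtypeEquivRight fun g => isLeast_range_and_le_iff_mem_piFinset),
    Nat.card_eq_fintype_card, Fintype.card_coe,
    card_sdiff_of_subset (Fintype.piFinset_subset _ _ fun _ => Icc_subset_Icc_left (by omega))]
  simp

end

theorem complete_graph_lipschitz_count_general {V : Type*} [Fintype V]
    (v : V) (h : ℕ) :
    Nat.card {f : V → ℤ // f v = 0 ∧ ∀ x y : V, x ≠ y → |f x - f y| ≤ (h : ℤ)} =
      (h + 1) ^ (Fintype.card V) - h ^ (Fintype.card V) := by
  rw [← card_isLeast_range_zero_and_le h]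
  refine Nat.card_congr ((rootedEquivMinZero v (IsLipschitzOnComplete h)
    fun _ => isLipschitzOnComplete_sub_const_iff).trans (Equiv.subtypeEquivRight fun g => ?_))
  exact and_congr_right fun hg => by simpa using isLipschitzOnComplete_iff_le_of_isLeast hg

theorem complete_graph_lipschitz_count {V : Type*} [Fintype V]
    (hn : 1 ≤ Fintype.card V) (v : V) (h : ℕ) :
    Nat.card {f : V → ℤ // f v = 0 ∧ ∀ x y : V, x ≠ y → |f x - f y| ≤ (h : ℤ)} =
      (h + 1) ^ (Fintype.card V) - h ^ (Fintype.card V) :=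
  complete_graph_lipschitz_count_general v h
end

section
/- Let A, B ⊆ ℝⁿ be convex sets, each symmetric about the origin (x ∈ A implies -x ∈ A, and similarly for B), and suppose A ∩ (B + v) is compact for every v ∈ ℝⁿ. Then the function f(v) = Vol(A ∩ (B + v)) is maximized at v = 0, i.e., Vol(A ∩ (B + v)) ≤ Vol(A ∩ B) for all v. -/
/-!
On `ℝ`, Brunn–Minkowski for two nonempty sets is elementary: the halves of `F` and `G`,
translated so that they meet only at the midpoint of `max F` and `min G`, both lie in the
midpoint set. Applied to superlevel sets and integrated via the layer cake formula, it gives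
Prékopa–Leindler `f x * g y ≤ h ((x + y) / 2) ^ 2 → ∫ f * ∫ g ≤ (∫ h) ^ 2` on `ℝ`, and Tonelli
carries it to `ℝⁿ`. For `K = A ∩ (B + v)`, symmetry and convexity put the midpoint of `x` and
`-y` in `A ∩ B` whenever `x, y ∈ K`; Prékopa–Leindler for the indicators of `K`, `-K` and
`A ∩ B` then gives `vol K ^ 2 = vol K * vol (-K) ≤ vol (A ∩ B) ^ 2`.
-/

open MeasureTheory Set
open scoped ENNReal NNReal

theorem ENNReal.four_mul_le_sq_add (a b : ℝ≥0∞) : 4 * a * b ≤ (a + b) ^ 2 := by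
  rcases eq_or_ne a ⊤ with rfl | ha
  · simp
  rcases eq_or_ne b ⊤ with rfl | hb
  · simp
  lift a to ℝ≥0 using ha
  lift b to ℝ≥0 using hb
  exact_mod_cast _root_.four_mul_le_sq_add a b

theorem volume_restrict_Ioi_setOf_ofReal_lt (c : ℝ≥0∞) :
    volume.restrict (Ioi 0) {t : ℝ | ENNReal.ofReal t < c} = c := by
  rw [Measure.restrict_apply' measurableSet_Ioi]
  rcases eq_or_ne c ⊤ with rfl | hc
  · simp
  · lift c to ℝ≥0 using hc
    have : {t : ℝ | ENNReal.ofReal t < c} ∩ Ioi 0 = Ioo 0 (c : ℝ) := by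
      ext t
      simp only [mem_inter_iff, mem_ofPred_eq, mem_Ioi, mem_Ioo, ← ENNReal.ofReal_coe_nnreal,
        ENNReal.ofReal_lt_ofReal_iff']
      constructor
      · rintro ⟨⟨h, -⟩, h0⟩; exact ⟨h0, h⟩
      · rintro ⟨h0, h⟩; exact ⟨⟨h, h0.trans h⟩, h0⟩
    simp [this]

theorem lintegral_eq_lintegral_meas_ofReal_lt {α : Type*} [MeasurableSpace α] (μ : Measure α)
    [SFinite μ] {f : α → ℝ≥0∞} (hf : Measurable f) :
    ∫⁻ x, f x ∂μ = ∫⁻ t in Ioi 0, μ {x | ENNReal.ofReal t < f x} := by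
  have hE : MeasurableSet {p : α × ℝ | ENNReal.ofReal p.2 < f p.1} :=
    measurableSet_lt (ENNReal.measurable_ofReal.comp measurable_snd) (hf.comp measurable_fst)
  calc ∫⁻ x, f x ∂μ = μ.prod (volume.restrict (Ioi 0)) {p | ENNReal.ofReal p.2 < f p.1} := by
        simp only [Measure.prod_apply hE, preimage_ofPred_eq,
          volume_restrict_Ioi_setOf_ofReal_lt]
    _ = ∫⁻ t in Ioi 0, μ {x | ENNReal.ofReal t < f x} := by
        rw [Measure.prod_apply_symm hE]; rfl

theorem lintegral_eq_iSup_lintegral_min_natCast {α : Type*} [MeasurableSpace α] {μ : Measure α}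
    {f : α → ℝ≥0∞} (hf : Measurable f) :
    ∫⁻ x, f x ∂μ = ⨆ N : ℕ, ∫⁻ x, min (f x) N ∂μ := by
  rw [← lintegral_iSup (fun N => hf.min measurable_const)
    (fun N M hNM x => min_le_min le_rfl (Nat.cast_le.2 hNM))]
  simp_rw [← inf_iSup_eq, ENNReal.iSup_natCast, inf_top_eq]

theorem Real.midpoint_eq_add_div_two (x y : ℝ) : midpoint ℝ x y = (x + y) / 2 := by
  rw [midpoint_eq_smul_add, smul_eq_mul, invOf_eq_inv]; ring

theorem Real.volume_image_add_div_two (c : ℝ) (F : Set ℝ) :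
    volume ((fun x => (x + c) / 2) '' F) = 2⁻¹ * volume F := by
  have : (fun x : ℝ => (x + c) / 2) = AffineMap.homothety c (2⁻¹ : ℝ) := by
    ext x; simp only [AffineMap.homothety_apply, vsub_eq_sub, smul_eq_mul, vadd_eq_add]; ring
  rw [this, Measure.addHaar_image_homothety, abs_of_pos (by positivity), Module.finrank_self,
    pow_one, ENNReal.ofReal_inv_of_pos two_pos, ENNReal.ofReal_ofNat]

theorem Real.volume_add_volume_le_two_mul_of_isCompact {F G H : Set ℝ} (hF : IsCompact F)
    (hG : IsCompact G) (hFne : F.Nonempty) (hGne : G.Nonempty)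
    (hmid : ∀ a ∈ F, ∀ b ∈ G, midpoint ℝ a b ∈ H) :
    volume F + volume G ≤ 2 * volume H := by
  simp only [Real.midpoint_eq_add_div_two] at hmid
  obtain ⟨a, haF, ha⟩ := hF.exists_isGreatest hFne
  obtain ⟨b, hbG, hb⟩ := hG.exists_isLeast hGne
  set U := (fun x => (x + b) / 2) '' F
  set V := (fun y => (y + a) / 2) '' G
  -- `U` lies left of `(a + b) / 2` and `V` right of it
  have hUV : U ∩ V ⊆ {(a + b) / 2} := by
    rintro _ ⟨⟨x, hx, rfl⟩, ⟨y, hy, hxy⟩⟩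
    have := ha hx; have := hb hy
    simp only [mem_singleton_iff] at hxy ⊢
    linarith
  have hV : MeasurableSet V := (hG.image (by fun_prop)).measurableSet
  calc volume F + volume G = 2 * (volume U + volume V) := by
        rw [Real.volume_image_add_div_two, Real.volume_image_add_div_two, ← mul_add, ← mul_assoc,
          ENNReal.mul_inv_cancel two_ne_zero ENNReal.ofNat_ne_top, one_mul]
    _ = 2 * volume (U ∪ V) := by
        rw [← measure_union_add_inter U hV, measure_mono_null hUV (measure_singleton _), add_zero]
    _ ≤ 2 * volume H := by
        gcongr
        rintro _ (⟨x, hx, rfl⟩ | ⟨y, hy, rfl⟩)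
        · exact hmid x hx b hbG
        · simpa only [add_comm y] using hmid a haF y hy

theorem Real.volume_add_volume_le_two_mul {F G H : Set ℝ} (hF : MeasurableSet F)
    (hG : MeasurableSet G) (hFne : F.Nonempty) (hGne : G.Nonempty)
    (hmid : ∀ a ∈ F, ∀ b ∈ G, midpoint ℝ a b ∈ H) :
    volume F + volume G ≤ 2 * volume H := by
  obtain ⟨a₀, ha₀⟩ := hFne
  obtain ⟨b₀, hb₀⟩ := hGne
  rw [hF.measure_eq_iSup_isCompact, hG.measure_eq_iSup_isCompact]
  simp only [iSup_and']
  refine ENNReal.biSup_add_biSup_le' ⟨∅, empty_subset _, isCompact_empty⟩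
    ⟨∅, empty_subset _, isCompact_empty⟩ fun K ⟨hKF, hK⟩ L ⟨hLG, hL⟩ => ?_
  -- adjoin a point to each side so that both compact sets are nonempty
  calc volume K + volume L ≤ volume (insert a₀ K) + volume (insert b₀ L) := by
        gcongr <;> exact subset_insert _ _
    _ ≤ 2 * volume H := by
        refine Real.volume_add_volume_le_two_mul_of_isCompact (hK.insert a₀) (hL.insert b₀)
          (insert_nonempty _ _) (insert_nonempty _ _) fun a ha b hb => hmid a ?_ b ?_
        exacts [insert_subset ha₀ hKF ha, insert_subset hb₀ hLG hb]

theorem Real.lintegral_add_lintegral_le_two_mul_of_iSup_eq {f g h : ℝ → ℝ≥0∞}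
    (hf : Measurable f) (hg : Measurable g) (hh : Measurable h)
    (hsup : ⨆ x, f x = ⨆ x, g x) (hmin : ∀ x y, min (f x) (g y) ≤ h (midpoint ℝ x y)) :
    (∫⁻ x, f x) + ∫⁻ x, g x ≤ 2 * ∫⁻ x, h x := by
  -- Brunn-Minkowski for the superlevel sets, which are nonempty or empty simultaneously
  have hlevel : ∀ s : ℝ≥0∞,
      volume {x | s < f x} + volume {x | s < g x} ≤ 2 * volume {x | s < h x} := by
    intro s
    by_cases hs : s < ⨆ x, f x
    · refine Real.volume_add_volume_le_two_mul (measurableSet_lt measurable_const hf)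
        (measurableSet_lt measurable_const hg) (lt_iSup_iff.1 hs) (lt_iSup_iff.1 (hsup ▸ hs :))
        fun a ha b hb => (lt_min ha hb).trans_le (hmin a b)
    · have hempty : ∀ u : ℝ → ℝ≥0∞, ⨆ x, u x ≤ s → {x | s < u x} = ∅ := fun u hu =>
        eq_empty_of_forall_notMem fun x hx => (lt_irrefl s) (hx.trans_le ((le_iSup u x).trans hu))
      rw [not_lt] at hs
      rw [hempty f hs, hempty g (hsup ▸ hs), measure_empty, add_zero]
      exact zero_le
  calc (∫⁻ x, f x) + ∫⁻ x, g x
      = (∫⁻ t in Ioi 0, volume {x | ENNReal.ofReal t < f x}) +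
          ∫⁻ t in Ioi 0, volume {x | ENNReal.ofReal t < g x} := by
        rw [lintegral_eq_lintegral_meas_ofReal_lt _ hf, lintegral_eq_lintegral_meas_ofReal_lt _ hg]
    _ ≤ ∫⁻ t in Ioi 0, 2 * volume {x | ENNReal.ofReal t < h x} :=
        (le_lintegral_add _ _).trans (lintegral_mono fun t => hlevel _)
    _ = 2 * ∫⁻ x, h x := by
        rw [lintegral_const_mul' _ _ ENNReal.ofNat_ne_top,
          lintegral_eq_lintegral_meas_ofReal_lt _ hh]

theorem Real.lintegral_mul_le_sq_of_iSup_ne_top {f g h : ℝ → ℝ≥0∞}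
    (hf : Measurable f) (hg : Measurable g) (hh : Measurable h)
    (hfb : ⨆ x, f x ≠ ∞) (hgb : ⨆ x, g x ≠ ∞)
    (hfgh : ∀ x y, f x * g y ≤ h (midpoint ℝ x y) ^ 2) :
    (∫⁻ x, f x) * ∫⁻ x, g x ≤ (∫⁻ x, h x) ^ 2 := by
  lift ⨆ x, f x to ℝ≥0 using hfb with c hc
  lift ⨆ x, g x to ℝ≥0 using hgb with d hd
  rcases eq_or_ne c 0 with rfl | hc0
  · simp [show f = 0 from funext (ENNReal.iSup_eq_zero.1 (by simp [← hc]))]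
  rcases eq_or_ne d 0 with rfl | hd0
  · simp [show g = 0 from funext (ENNReal.iSup_eq_zero.1 (by simp [← hd]))]
  -- rescale `f` and `g` by `l` and `l⁻¹` so that their suprema agree
  set l : ℝ≥0 := NNReal.sqrt (d / c)
  have hl : l ≠ 0 := by simp [l, hc0, hd0]
  have hsup : ⨆ x, (l : ℝ≥0∞) * f x = ⨆ x, (l : ℝ≥0∞)⁻¹ * g x := by
    rw [← ENNReal.mul_iSup, ← ENNReal.mul_iSup, ← hc, ← hd, ← ENNReal.coe_inv hl]
    norm_cast
    rw [eq_inv_mul_iff_mul_eq₀ hl, ← mul_assoc, NNReal.mul_self_sqrt,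
      div_mul_cancel₀ _ hc0]
  have hcancel (a b : ℝ≥0∞) : (l * a) * ((l : ℝ≥0∞)⁻¹ * b) = a * b := by
    rw [mul_mul_mul_comm, ENNReal.mul_inv_cancel (by simpa) ENNReal.coe_ne_top, one_mul]
  have hmin : ∀ x y, min (l * f x) ((l : ℝ≥0∞)⁻¹ * g y) ≤ h (midpoint ℝ x y) := by
    intro x y
    refine (ENNReal.pow_le_pow_left_iff two_ne_zero).1 ?_
    calc min (l * f x) ((l : ℝ≥0∞)⁻¹ * g y) ^ 2
        ≤ (l * f x) * ((l : ℝ≥0∞)⁻¹ * g y) := by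
          rw [sq]; exact mul_le_mul' (min_le_left _ _) (min_le_right _ _)
      _ ≤ h (midpoint ℝ x y) ^ 2 := by rw [hcancel]; exact hfgh x y
  have hsum := Real.lintegral_add_lintegral_le_two_mul_of_iSup_eq
    (hf.const_mul _) (hg.const_mul _) hh hsup hmin
  rw [lintegral_const_mul _ hf, lintegral_const_mul _ hg] at hsum
  refine (ENNReal.mul_le_mul_iff_right four_ne_zero ENNReal.ofNat_ne_top).1 ?_
  calc 4 * ((∫⁻ x, f x) * ∫⁻ x, g x)
      = 4 * (l * ∫⁻ x, f x) * ((l : ℝ≥0∞)⁻¹ * ∫⁻ x, g x) := by rw [mul_assoc, hcancel]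
    _ ≤ (l * (∫⁻ x, f x) + (l : ℝ≥0∞)⁻¹ * ∫⁻ x, g x) ^ 2 := ENNReal.four_mul_le_sq_add _ _
    _ ≤ (2 * ∫⁻ x, h x) ^ 2 := by gcongr
    _ = 4 * (∫⁻ x, h x) ^ 2 := by rw [mul_pow]; norm_num

section PrekopaLeindler

variable {E F : Type*} [AddCommGroup E] [Module ℝ E] [MeasurableSpace E]
  [AddCommGroup F] [Module ℝ F] [MeasurableSpace F]

/-- Prékopa–Leindler with weight `1 / 2`, squared so that no square root appears. -/
def PrekopaLeindler (μ : Measure E) : Prop :=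
  ∀ f g h : E → ℝ≥0∞, Measurable f → Measurable g → Measurable h →
    (∀ x y, f x * g y ≤ h (midpoint ℝ x y) ^ 2) →
      (∫⁻ x, f x ∂μ) * ∫⁻ x, g x ∂μ ≤ (∫⁻ x, h x ∂μ) ^ 2

theorem prekopaLeindler_of_unique [Unique E] (μ : Measure E) : PrekopaLeindler μ := by
  intro f g h _ _ _ hfgh
  simp only [lintegral_unique, mul_pow]
  calc f default * μ univ * (g default * μ univ) = f default * g default * μ univ ^ 2 := by ring
    _ ≤ h default ^ 2 * μ univ ^ 2 := by
        gcongr; simpa [Subsingleton.elim (midpoint ℝ _ _) default] using hfgh default default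

theorem PrekopaLeindler.prod {μ : Measure E} {ν : Measure F} [SFinite μ] [SFinite ν]
    (hμ : PrekopaLeindler μ) (hν : PrekopaLeindler ν) : PrekopaLeindler (μ.prod ν) := by
  intro f g h hf hg hh hfgh
  rw [lintegral_prod _ hf.aemeasurable, lintegral_prod _ hg.aemeasurable,
    lintegral_prod _ hh.aemeasurable]
  refine hμ _ _ _ hf.lintegral_prod_right' hg.lintegral_prod_right' hh.lintegral_prod_right'
    fun x₁ x₂ => hν _ _ _ (hf.comp measurable_prodMk_left) (hg.comp measurable_prodMk_left)
      (hh.comp measurable_prodMk_left) fun y₁ y₂ => hfgh (x₁, y₁) (x₂, y₂)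

theorem PrekopaLeindler.of_measurePreserving {μ : Measure E} {ν : Measure F} {e : E → F}
    (hμ : PrekopaLeindler μ) (he : MeasurePreserving e μ ν)
    (he_mid : ∀ x y, e (midpoint ℝ x y) = midpoint ℝ (e x) (e y)) : PrekopaLeindler ν := by
  intro f g h hf hg hh hfgh
  rw [← he.lintegral_comp hf, ← he.lintegral_comp hg, ← he.lintegral_comp hh]
  exact hμ _ _ _ (hf.comp he.measurable) (hg.comp he.measurable) (hh.comp he.measurable)
    fun x y => by simpa only [he_mid] using hfgh (e x) (e y)

theorem PrekopaLeindler.measure_mul_le_sq {μ : Measure E} (hμ : PrekopaLeindler μ)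
    {K L S : Set E} (hK : NullMeasurableSet K μ) (hL : NullMeasurableSet L μ)
    (hKLS : ∀ x ∈ K, ∀ y ∈ L, midpoint ℝ x y ∈ S) : μ K * μ L ≤ μ S ^ 2 := by
  obtain ⟨K', hK'K, hK', hK'ae⟩ := hK.exists_measurable_subset_ae_eq
  obtain ⟨L', hL'L, hL', hL'ae⟩ := hL.exists_measurable_subset_ae_eq
  have hind : ∀ x y, K'.indicator 1 x * L'.indicator 1 y ≤
      (toMeasurable μ S).indicator (1 : E → ℝ≥0∞) (midpoint ℝ x y) ^ 2 := by
    intro x y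
    by_cases hxy : x ∈ K' ∧ y ∈ L'
    · simp [hxy.1, hxy.2, subset_toMeasurable μ S (hKLS x (hK'K hxy.1) y (hL'L hxy.2))]
    · rcases not_and_or.1 hxy with hx | hy <;> simp [*]
  have := hμ _ _ _ (measurable_one.indicator hK') (measurable_one.indicator hL')
    (measurable_one.indicator (measurableSet_toMeasurable μ S)) hind
  rwa [lintegral_indicator_one hK', lintegral_indicator_one hL',
    lintegral_indicator_one (measurableSet_toMeasurable μ S), measure_toMeasurable,
    measure_congr hK'ae, measure_congr hL'ae] at this

theorem PrekopaLeindler.measure_le_of_midpoint_neg_mem [MeasurableNeg E] {μ : Measure E}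
    [μ.IsNegInvariant] (hμ : PrekopaLeindler μ) {K S : Set E} (hK : NullMeasurableSet K μ)
    (hKS : ∀ x ∈ K, ∀ y ∈ K, midpoint ℝ x (-y) ∈ S) : μ K ≤ μ S := by
  refine (ENNReal.pow_le_pow_left_iff two_ne_zero).1 ?_
  calc μ K ^ 2 = μ K * μ (-K) := by rw [Measure.measure_neg, sq]
    _ ≤ μ S ^ 2 := hμ.measure_mul_le_sq hK
        (hK.preimage (Measure.measurePreserving_neg μ).quasiMeasurePreserving) fun x hx y hy => by
        simpa using hKS x hx (-y) hy

end PrekopaLeindler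

theorem prekopaLeindler_volume_real : PrekopaLeindler (volume : Measure ℝ) := by
  intro f g h hf hg hh hfgh
  rw [lintegral_eq_iSup_lintegral_min_natCast hf, lintegral_eq_iSup_lintegral_min_natCast hg,
    ENNReal.iSup_mul]
  refine iSup_le fun N => ?_
  rw [ENNReal.mul_iSup]
  refine iSup_le fun M => ?_
  have hbdd (u : ℝ → ℝ≥0∞) : ⨆ x, min (u x) (max N M : ℕ) ≠ ∞ :=
    ne_top_of_le_ne_top (ENNReal.natCast_ne_top _) (iSup_le fun x => min_le_right _ _)
  calc (∫⁻ x, min (f x) N) * ∫⁻ x, min (g x) M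
      ≤ (∫⁻ x, min (f x) (max N M : ℕ)) * ∫⁻ x, min (g x) (max N M : ℕ) := by
        gcongr <;> exact_mod_cast (by omega)
    _ ≤ (∫⁻ x, h x) ^ 2 :=
        Real.lintegral_mul_le_sq_of_iSup_ne_top (hf.min measurable_const)
          (hg.min measurable_const) hh (hbdd f) (hbdd g) fun x y =>
            (mul_le_mul' (min_le_left _ _) (min_le_left _ _)).trans (hfgh x y)

theorem prekopaLeindler_volume_pi (n : ℕ) : PrekopaLeindler (volume : Measure (Fin n → ℝ)) := by
  induction n with
  | zero => exact prekopaLeindler_of_unique _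
  | succ n ih =>
    refine (prekopaLeindler_volume_real.prod ih).of_measurePreserving
      (volume_preserving_piFinSuccAbove (fun _ => ℝ) 0).symm fun p q => ?_
    ext i
    refine Fin.cases ?_ (fun j => ?_) i <;> simp [midpoint_eq_smul_add, mul_add]

theorem prekopaLeindler_volume_euclideanSpace (n : ℕ) :
    PrekopaLeindler (volume : Measure (EuclideanSpace ℝ (Fin n))) :=
  (prekopaLeindler_volume_pi n).of_measurePreserving
    (EuclideanSpace.volume_preserving_symm_measurableEquiv_toLp (Fin n)).symm
    fun x y => by simp [midpoint_eq_smul_add]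

theorem midpoint_neg_mem_inter_of_mem_inter_translate {E : Type*} [AddCommGroup E] [Module ℝ E]
    {A B : Set E} (hA : Convex ℝ A) (hB : Convex ℝ B)
    (hAs : ∀ x ∈ A, -x ∈ A) (hBs : ∀ x ∈ B, -x ∈ B) {v x y : E}
    (hx : x ∈ A ∩ ((· + v) '' B)) (hy : y ∈ A ∩ ((· + v) '' B)) :
    midpoint ℝ x (-y) ∈ A ∩ B := by
  obtain ⟨hxA, b, hb, rfl⟩ := hx
  obtain ⟨hyA, b', hb', rfl⟩ := hy
  refine ⟨hA.midpoint_mem hxA (hAs _ hyA), ?_⟩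
  convert hB.midpoint_mem hb (hBs b' hb') using 1
  simp only [midpoint_eq_smul_add]
  congr 1
  abel

theorem vol_inter_translate_le_general {n : ℕ} (A B : Set (EuclideanSpace ℝ (Fin n)))
    (hA : Convex ℝ A) (hB : Convex ℝ B)
    (hAs : ∀ x ∈ A, -x ∈ A) (hBs : ∀ x ∈ B, -x ∈ B) :
    ∀ v : EuclideanSpace ℝ (Fin n),
      volume (A ∩ ((· + v) '' B)) ≤ volume (A ∩ B) := by
  intro v
  have hconvex : Convex ℝ (A ∩ ((· + v) '' B)) := by
    refine hA.inter ?_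
    simpa only [add_comm _ v] using hB.translate v
  exact (prekopaLeindler_volume_euclideanSpace n).measure_le_of_midpoint_neg_mem
    (hconvex.nullMeasurableSet volume) fun x hx y hy =>
      midpoint_neg_mem_inter_of_mem_inter_translate hA hB hAs hBs hx hy

theorem vol_inter_translate_le {n : ℕ} (A B : Set (EuclideanSpace ℝ (Fin n)))
    (hA : Convex ℝ A) (hB : Convex ℝ B)
    (hAs : ∀ x ∈ A, -x ∈ A) (hBs : ∀ x ∈ B, -x ∈ B)
    (hcompact : ∀ v : EuclideanSpace ℝ (Fin n), IsCompact (A ∩ ((· + v) '' B))) :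
    ∀ v : EuclideanSpace ℝ (Fin n),
      volume (A ∩ ((· + v) '' B)) ≤ volume (A ∩ B) :=
  vol_inter_translate_le_general A B hA hB hAs hBs
end

section
/- Let γ be the smallest positive solution of tan(γ) = 1/γ, and let λ = 2/γ². Then the function b(x) = cos(γx) satisfies λ·b(x) = ∫_{-1}^{x} (2 + t - x)·b(t) dt + ∫_{x}^{1} (2 - t + x)·b(t) dt for all x ∈ [-1, 1]. -/
/-!
Integrating by parts against the affine kernel, `t ↦ (c + d t) sin(γ t)/γ + d cos(γ t)/γ²` is an
antiderivative of `(c + d t) cos(γ t)`. Evaluating both integrals this way, the right-hand side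
equals `2 cos(γ x)/γ²` plus a multiple of `γ sin γ - cos γ`, which vanishes since `tan γ = 1/γ`.
-/

open Real

theorem mul_sin_eq_cos_of_tan_eq_inv {γ : ℝ} (hγ : γ ≠ 0) (h : tan γ = 1 / γ) :
    γ * sin γ = cos γ := by
  have hcos : cos γ ≠ 0 := by
    intro hc
    rw [tan_eq_sin_div_cos, hc, div_zero] at h
    exact one_div_ne_zero hγ h.symm
  rw [tan_eq_sin_div_cos, div_eq_div_iff hcos hγ] at h
  linarith

theorem hasDerivAt_affine_mul_sin_add_cos {γ : ℝ} (hγ : γ ≠ 0) (c d t : ℝ) :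
    HasDerivAt (fun t => (c + d * t) * sin (γ * t) / γ + d * cos (γ * t) / γ ^ 2)
      ((c + d * t) * cos (γ * t)) t := by
  have hlin : HasDerivAt (fun t => γ * t) γ t := by
    simpa using (hasDerivAt_id t).const_mul γ
  have haff : HasDerivAt (fun t => c + d * t) d t := by
    simpa using ((hasDerivAt_id t).const_mul d).const_add c
  have := ((haff.mul (hlin.sin)).div_const γ).add ((hlin.cos.const_mul d).div_const (γ ^ 2))
  refine this.congr_deriv ?_
  field_simp
  ring

theorem integral_affine_mul_cos {γ : ℝ} (hγ : γ ≠ 0) (a b c d : ℝ) :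
    ∫ t in a..b, (c + d * t) * cos (γ * t) =
      ((c + d * b) * sin (γ * b) / γ + d * cos (γ * b) / γ ^ 2) -
        ((c + d * a) * sin (γ * a) / γ + d * cos (γ * a) / γ ^ 2) :=
  intervalIntegral.integral_eq_sub_of_hasDerivAt
    (fun t _ => hasDerivAt_affine_mul_sin_add_cos hγ c d t)
    (Continuous.intervalIntegrable (by fun_prop) _ _)

theorem cos_eigenfunction_general (γ : ℝ) (hγpos : 0 < γ) (hγ : Real.tan γ = 1 / γ) :
    ∀ x ∈ Set.Icc (-1 : ℝ) 1,
      (2 / γ ^ 2) * Real.cos (γ * x) =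
        (∫ t in (-1 : ℝ)..x, (2 + t - x) * Real.cos (γ * t)) +
          ∫ t in x..(1 : ℝ), (2 - t + x) * Real.cos (γ * t) := by
  intro x _
  have hγ0 : γ ≠ 0 := hγpos.ne'
  have hleft : (fun t => (2 + t - x) * cos (γ * t)) = fun t => ((2 - x) + 1 * t) * cos (γ * t) := by
    ext t; ring
  have hright : (fun t => (2 - t + x) * cos (γ * t)) = fun t => ((2 + x) + -1 * t) * cos (γ * t) := by
    ext t; ring
  rw [hleft, hright, integral_affine_mul_cos hγ0, integral_affine_mul_cos hγ0]
  simp only [mul_neg, mul_one, sin_neg, cos_neg]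
  field_simp
  linear_combination (-2) * mul_sin_eq_cos_of_tan_eq_inv hγ0 hγ

theorem cos_eigenfunction (γ : ℝ) (hγpos : 0 < γ) (hγ : Real.tan γ = 1 / γ)
    (hmin : ∀ γ' : ℝ, 0 < γ' → Real.tan γ' = 1 / γ' → γ ≤ γ') :
    ∀ x ∈ Set.Icc (-1 : ℝ) 1,
      (2 / γ ^ 2) * Real.cos (γ * x) =
        (∫ t in (-1 : ℝ)..x, (2 + t - x) * Real.cos (γ * t)) +
          ∫ t in x..(1 : ℝ), (2 - t + x) * Real.cos (γ * t) :=
  cos_eigenfunction_general γ hγpos hγ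
end

section
/- Let h ≥ 1 be an integer and let X₁, X₂, X₃ be independent random variables each uniform on the integers {-h, ..., h}. Then P(|X₁ + X₂ + X₃| ≤ 2h) → 23/24 as h → ∞. -/
open Finset Filter

lemma aux_sumrev (m : ℕ) : 2 * ∑ b ∈ range m, (m - b) = m * (m+1) := by
  induction m with
  | zero => simp
  | succ n ih =>
    rw [Finset.sum_range_succ]
    have h1 : ∑ b ∈ range n, (n + 1 - b) = (∑ b ∈ range n, (n - b)) + n := by
      have e : ∑ b ∈ range n, (n + 1 - b) = ∑ b ∈ range n, ((n - b) + 1) :=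
        Finset.sum_congr rfl (fun b hb => by simp only [mem_range] at hb; omega)
      rw [e, Finset.sum_add_distrib]
      simp
    rw [h1]
    have e2 : (n+1) * (n+1+1) = n*(n+1) + 2*n + 2 := by ring
    omega

lemma aux_sumsq (n : ℕ) : 3 * ∑ a ∈ range n, (a+1) * (a+2) = n * (n+1) * (n+2) := by
  induction n with
  | zero => simp
  | succ m ih =>
    rw [Finset.sum_range_succ, Nat.mul_add, ih]
    ring

/-- count of the simplex -/
lemma aux_cardT (h : ℕ) :
    6 * ((range h ×ˢ range h ×ˢ range h).filter
        (fun t : ℕ × ℕ × ℕ => t.1 + t.2.1 + t.2.2 < h)).card = h * (h+1) * (h+2) := by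
  rw [Finset.card_filter, Finset.sum_product]
  have inner : ∀ a : ℕ, a ∈ range h →
      (∑ y ∈ range h ×ˢ range h, if a + y.1 + y.2 < h then 1 else 0)
        = ∑ b ∈ range (h - a), (h - a - b) := by
    intro a ha
    rw [Finset.sum_product]
    have step : ∀ b : ℕ, (∑ c ∈ range h, if a + b + c < h then 1 else 0) = h - a - b := by
      intro b
      rw [← Finset.card_filter]
      have : (range h).filter (fun c => a + b + c < h) = range (h - a - b) := by
        ext c; simp only [mem_filter, mem_range]; omega
      rw [this, Finset.card_range]
    rw [Finset.sum_congr rfl (fun b _ => step b)]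
    apply (Finset.sum_subset (Finset.range_subset_range.2 (by omega)) ?_).symm
    intro b _ hb
    simp only [mem_range] at hb
    omega
  rw [Finset.sum_congr rfl inner]
  have mid : ∀ a : ℕ, a ∈ range h →
      6 * ∑ b ∈ range (h - a), (h - a - b) = 3 * ((h - a) * (h - a + 1)) := by
    intro a _
    have := aux_sumrev (h - a)
    omega
  rw [Finset.mul_sum, Finset.sum_congr rfl mid, ← Finset.mul_sum]
  have hrefl : ∑ a ∈ range h, (h - a) * (h - a + 1) = ∑ a ∈ range h, (a+1) * (a+2) := by
    rw [← Finset.sum_range_reflect (fun a => (a+1) * (a+2)) h]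
    exact Finset.sum_congr rfl (fun a ha => by simp only [mem_range] at ha; congr 1 <;> omega)
  rw [hrefl, aux_sumsq]

lemma aux_cardPlus (h : ℕ) :
    ((Finset.Icc (-(h : ℤ)) h ×ˢ Finset.Icc (-(h : ℤ)) h ×ˢ Finset.Icc (-(h : ℤ)) h).filter
        (fun t => 2 * (h : ℤ) < t.1 + t.2.1 + t.2.2)).card
      = ((range h ×ˢ range h ×ˢ range h).filter
        (fun t : ℕ × ℕ × ℕ => t.1 + t.2.1 + t.2.2 < h)).card := by
  refine Finset.card_bij'
    (i := fun t _ => (((h : ℤ) - t.1).toNat, ((h : ℤ) - t.2.1).toNat, ((h : ℤ) - t.2.2).toNat))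
    (j := fun u _ => ((h : ℤ) - u.1, (h : ℤ) - u.2.1, (h : ℤ) - u.2.2)) ?_ ?_ ?_ ?_
  · intro t ht
    simp only [Finset.mem_filter, Finset.mem_product, Finset.mem_Icc, Finset.mem_range] at ht ⊢
    omega
  · intro u hu
    simp only [Finset.mem_filter, Finset.mem_product, Finset.mem_Icc, Finset.mem_range] at hu ⊢
    omega
  · intro t ht
    simp only [Finset.mem_filter, Finset.mem_product, Finset.mem_Icc] at ht
    obtain ⟨⟨⟨h1, h2⟩, ⟨h3, h4⟩, h5, h6⟩, h7⟩ := ht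
    simp only [Prod.ext_iff]
    refine ⟨by omega, by omega, by omega⟩
  · intro u hu
    simp only [Finset.mem_filter, Finset.mem_product, Finset.mem_range] at hu
    simp only [Prod.ext_iff]
    refine ⟨by omega, by omega, by omega⟩

lemma aux_cardMinus (h : ℕ) :
    ((Finset.Icc (-(h : ℤ)) h ×ˢ Finset.Icc (-(h : ℤ)) h ×ˢ Finset.Icc (-(h : ℤ)) h).filter
        (fun t => t.1 + t.2.1 + t.2.2 < -(2 * (h : ℤ)))).card
      = ((Finset.Icc (-(h : ℤ)) h ×ˢ Finset.Icc (-(h : ℤ)) h ×ˢ Finset.Icc (-(h : ℤ)) h).filter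
        (fun t => 2 * (h : ℤ) < t.1 + t.2.1 + t.2.2)).card := by
  refine Finset.card_bij'
    (i := fun t _ => (-t.1, -t.2.1, -t.2.2))
    (j := fun t _ => (-t.1, -t.2.1, -t.2.2)) ?_ ?_ ?_ ?_
  · rintro ⟨x, y, z⟩ ht
    simp only [Finset.mem_filter, Finset.mem_product, Finset.mem_Icc] at ht ⊢
    omega
  · rintro ⟨x, y, z⟩ ht
    simp only [Finset.mem_filter, Finset.mem_product, Finset.mem_Icc] at ht ⊢
    omega
  · rintro ⟨x, y, z⟩ _; simp
  · rintro ⟨x, y, z⟩ _; simp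

lemma aux_count (h : ℕ) :
    6 * (((Finset.Icc (-(h : ℤ)) h ×ˢ Finset.Icc (-(h : ℤ)) h ×ˢ Finset.Icc (-(h : ℤ)) h).filter
        (fun t => |t.1 + t.2.1 + t.2.2| ≤ 2 * (h : ℤ))).card)
      + 2 * (h * (h+1) * (h+2)) = 6 * (2*h+1)^3 := by
  set s := Finset.Icc (-(h : ℤ)) h ×ˢ Finset.Icc (-(h : ℤ)) h ×ˢ Finset.Icc (-(h : ℤ)) h with hs
  have hcard : s.card = (2*h+1)^3 := by
    rw [hs, Finset.card_product, Finset.card_product, Int.card_Icc]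
    have : ((h : ℤ) + 1 - -(h : ℤ)).toNat = 2*h+1 := by omega
    rw [this]; ring
  have hsplit := Finset.card_filter_add_card_filter_not
    (s := s) (p := fun t : ℤ × ℤ × ℤ => |t.1 + t.2.1 + t.2.2| ≤ 2 * (h : ℤ))
  have hneg : (s.filter (fun t : ℤ × ℤ × ℤ => ¬ |t.1 + t.2.1 + t.2.2| ≤ 2 * (h : ℤ))).card
      = (s.filter (fun t => 2 * (h : ℤ) < t.1 + t.2.1 + t.2.2)).card
        + (s.filter (fun t => t.1 + t.2.1 + t.2.2 < -(2 * (h : ℤ)))).card := by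
    have congr1 : (s.filter (fun t : ℤ × ℤ × ℤ => ¬ |t.1 + t.2.1 + t.2.2| ≤ 2 * (h : ℤ)))
        = (s.filter (fun t => 2 * (h : ℤ) < t.1 + t.2.1 + t.2.2
            ∨ t.1 + t.2.1 + t.2.2 < -(2 * (h : ℤ)))) := by
      apply Finset.filter_congr
      intro t _
      rw [not_le, lt_abs]
      constructor <;> (rintro (h1 | h1); exacts [Or.inl h1, Or.inr (by omega)])
    rw [congr1, Finset.filter_or]
    apply Finset.card_union_of_disjoint
    rw [Finset.disjoint_left]
    intro t ht1 ht2
    simp only [Finset.mem_filter] at ht1 ht2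
    omega
  have h6 := aux_cardT h
  rw [aux_cardMinus, aux_cardPlus] at hneg
  omega

theorem prob_abs_sum_three_discrete_uniform_tendsto :
    Tendsto (fun h : ℕ =>
      (((Finset.Icc (-(h : ℤ)) h ×ˢ Finset.Icc (-(h : ℤ)) h ×ˢ Finset.Icc (-(h : ℤ)) h).filter
          (fun t => |t.1 + t.2.1 + t.2.2| ≤ 2 * (h : ℤ))).card : ℝ) / (2 * h + 1) ^ 3)
      atTop (nhds (23 / 24)) := by
  set g : ℝ → ℝ := fun t => (6 * (2 + t)^3 - 2 * ((1 + t) * (1 + 2*t))) / (6 * (2 + t)^3)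
    with hg
  have hcont : ContinuousAt g 0 := by
    apply ContinuousAt.div
    · fun_prop
    · fun_prop
    · norm_num
  have hg0 : g 0 = 23 / 24 := by rw [hg]; norm_num
  have htend : Tendsto (fun h : ℕ => g (1 / (h : ℝ))) atTop (nhds (23 / 24)) := by
    rw [← hg0]
    exact hcont.tendsto.comp tendsto_one_div_atTop_nhds_zero_nat
  apply htend.congr'
  filter_upwards [eventually_ge_atTop 1] with h hh
  have hkey := aux_count h
  have hkeyR : 6 * ((((Finset.Icc (-(h : ℤ)) h ×ˢ Finset.Icc (-(h : ℤ)) h ×ˢ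
        Finset.Icc (-(h : ℤ)) h).filter
        (fun t => |t.1 + t.2.1 + t.2.2| ≤ 2 * (h : ℤ))).card : ℝ))
      + 2 * ((h : ℝ) * ((h : ℝ)+1) * ((h : ℝ)+2)) = 6 * (2*(h : ℝ)+1)^3 := by
    exact_mod_cast congrArg (Nat.cast : ℕ → ℝ) hkey
  have hcardR : ((((Finset.Icc (-(h : ℤ)) h ×ˢ Finset.Icc (-(h : ℤ)) h ×ˢ
        Finset.Icc (-(h : ℤ)) h).filter
        (fun t => |t.1 + t.2.1 + t.2.2| ≤ 2 * (h : ℤ))).card : ℝ))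
      = (6 * (2*(h : ℝ)+1)^3 - 2 * ((h : ℝ) * ((h : ℝ)+1) * ((h : ℝ)+2))) / 6 := by
    linarith
  have hh0 : (h : ℝ) ≠ 0 := by
    have : (1 : ℝ) ≤ (h : ℝ) := by exact_mod_cast hh
    linarith
  have hd0 : (2*(h : ℝ)+1) ≠ 0 := by positivity
  have hg1 : (2 + 1/(h:ℝ)) ≠ 0 := by positivity
  rw [hg]
  simp only
  rw [hcardR]
  field_simp
end

section
/- Let d ≥ 2 be a real number and set α = 2·ln(d)/d. If additionally 2α < 1, then 2α·ln 2 + H(2α)·ln 2 < d·α², where H is the binary entropy function (base 2). -/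
noncomputable def binEnt (p : ℝ) : ℝ := -p * Real.logb 2 p - (1 - p) * Real.logb 2 (1 - p)

/-
With x = 2α = 4 ln d / d one has d α² = x ln d and ln x = ln 2 + ln (2 ln d) - ln d, so with
h = binEntropy (entropy in nats) the claim reads x ln 2 + h(x) < x ln d. The bound ln y < y - 1
at y = 1/(1 - x) gives h(x) < x (1 - ln x), which reduces the claim to e < 2 ln d; and 2α < 1
forces d > 4, hence 2 ln d > 4 ln 2 > e.
-/

open Real

lemma binEnt_mul_log_two (p : ℝ) : binEnt p * log 2 = binEntropy p := by
  have : log 2 ≠ 0 := (log_pos one_lt_two).ne'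
  simp only [binEnt, binEntropy, logb, log_inv]
  field_simp
  ring

lemma binEntropy_lt_mul_one_sub_log {p : ℝ} (hp₀ : 0 < p) (hp₁ : p < 1) :
    binEntropy p < p * (1 - log p) := by
  have hq : 0 < 1 - p := sub_pos.mpr hp₁
  have hlog : log (1 - p)⁻¹ < (1 - p)⁻¹ - 1 :=
    log_lt_sub_one_of_pos (inv_pos.mpr hq) (by rw [Ne, inv_eq_one]; linarith)
  calc binEntropy p = p * log p⁻¹ + (1 - p) * log (1 - p)⁻¹ := rfl
    _ < p * log p⁻¹ + (1 - p) * ((1 - p)⁻¹ - 1) := by gcongr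
    _ = p * (1 - log p) := by
      rw [log_inv]
      field_simp
      ring

lemma four_lt_of_four_mul_log_lt {d : ℝ} (hd : 2 ≤ d) (h : 4 * log d < d) : 4 < d := by
  by_contra! hd4
  have hlog2 : 0.6931471803 < log 2 := log_two_gt_d9
  have hlog_lt_one : log d < 1 := by linarith
  have hd_lt_exp : d < exp 1 := (log_lt_iff_lt_exp (by linarith)).mp hlog_lt_one
  have hlog_ge : log 2 ≤ log d := log_le_log two_pos hd
  linarith [exp_one_lt_d9]

lemma exp_one_lt_two_mul_log {d : ℝ} (hd : 4 < d) : exp 1 < 2 * log d := by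
  have hlog4 : log 4 < log d := log_lt_log four_pos hd
  have hlog4_eq : log 4 = 2 * log 2 := by
    rw [show (4 : ℝ) = 2 ^ 2 by norm_num, log_pow]
    norm_num
  linarith [exp_one_lt_d9, log_two_gt_d9]

theorem entropy_bound_for_alpha (d : ℝ) (hd : 2 ≤ d)
    (hsmall : 2 * (2 * Real.log d / d) < 1) :
    2 * (2 * Real.log d / d) * Real.log 2 + binEnt (2 * (2 * Real.log d / d)) * Real.log 2 <
      d * (2 * Real.log d / d) ^ 2 := by
  have hd₀ : 0 < d := by linarith
  set L := log d
  set x := 2 * (2 * L / d) with hx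
  have h4L : 4 * L < d := by
    rw [← div_lt_one hd₀, show 4 * L / d = x by ring]
    exact hsmall
  have hd4 : 4 < d := four_lt_of_four_mul_log_lt hd h4L
  have hL : 0 < L := log_pos (by linarith)
  have hx₀ : 0 < x := by positivity
  have hlog_x : log x = log 2 + log (2 * L) - L := by
    rw [show x = 2 * (2 * L) / d by ring, log_div (by positivity) hd₀.ne',
      log_mul two_ne_zero (by positivity)]
  have hrhs : d * (2 * L / d) ^ 2 = x * L := by
    rw [hx]
    field_simp
  have hlog_2L : 1 < log (2 * L) := by
    rw [lt_log_iff_exp_lt (by positivity)]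
    exact exp_one_lt_two_mul_log hd4
  rw [binEnt_mul_log_two, hrhs]
  calc x * log 2 + binEntropy x < x * log 2 + x * (1 - log x) := by
        gcongr
        exact binEntropy_lt_mul_one_sub_log hx₀ hsmall
    _ = x * L - x * (log (2 * L) - 1) := by
        rw [hlog_x]
        ring
    _ < x * L := sub_lt_self _ (mul_pos hx₀ (sub_pos.mpr hlog_2L))
end

section
/- Let d ≥ 5, and set x = 1/(d(d-1)) - 1/(2d²(d-1)²) and c = (1/d)·√(1 - 4/d). Then c²/(1+c)² ≤ x·(1-x)^{4d-4}. -/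
theorem lll_condition (d : ℝ) (hd : 5 ≤ d) :
    ((1 / d) * Real.sqrt (1 - 4 / d)) ^ 2 / (1 + (1 / d) * Real.sqrt (1 - 4 / d)) ^ 2 ≤
      (1 / (d * (d - 1)) - 1 / (2 * d ^ 2 * (d - 1) ^ 2)) *
        (1 - (1 / (d * (d - 1)) - 1 / (2 * d ^ 2 * (d - 1) ^ 2))) ^ ((4 : ℝ) * d - 4) := by
  have hd0 : (0:ℝ) < d := by linarith
  have hd1 : (0:ℝ) < d - 1 := by linarith
  set x : ℝ := 1 / (d * (d - 1)) - 1 / (2 * d ^ 2 * (d - 1) ^ 2) with hxdef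
  set c : ℝ := (1 / d) * Real.sqrt (1 - 4 / d) with hcdef
  have h4 : (0:ℝ) ≤ 1 - 4 / d := by
    have : 4 / d ≤ 1 := by
      rw [div_le_one hd0]; linarith
    linarith
  have hc0 : 0 ≤ c := by positivity
  have hc2 : c ^ 2 = (1 - 4 / d) / d ^ 2 := by
    rw [hcdef, mul_pow, Real.sq_sqrt h4]; ring
  -- clear-denominator identity for x
  have h2 : x * (2 * d ^ 2 * (d - 1) ^ 2) = 2 * d * (d - 1) - 1 := by
    rw [hxdef]; field_simp
  have hden : (0:ℝ) < 2 * d ^ 2 * (d - 1) ^ 2 := by positivity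
  have hx0 : 0 < x := by
    have hnum : (0:ℝ) < 2 * d * (d - 1) - 1 := by nlinarith
    nlinarith
  have hx_ge : 1 / d ^ 2 ≤ x := by
    rw [div_le_iff₀ (by positivity)]
    nlinarith [sq_nonneg (d - 1), sq_nonneg d]
  have hx1 : x ≤ 1 := by nlinarith
  -- Step A : LHS ≤ c^2
  have hA : c ^ 2 / (1 + c) ^ 2 ≤ c ^ 2 := by
    apply div_le_self (by positivity)
    nlinarith [sq_nonneg c]
  -- Step C : c^2 ≤ x * (1 + (4d-4) * (-x))
  have ht : 1 + ((4:ℝ) * d - 4) * (-x) = 1 - 4 / d + 2 / (d ^ 2 * (d - 1)) := by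
    rw [hxdef]; field_simp; ring
  have hC : c ^ 2 ≤ x * (1 + ((4:ℝ) * d - 4) * (-x)) := by
    rw [hc2, ht]
    have h1 : (1 - 4 / d) / d ^ 2 = (1 / d ^ 2) * (1 - 4 / d) := by ring
    have h2' : (1 / d ^ 2) * (1 - 4 / d) ≤ x * (1 - 4 / d) :=
      mul_le_mul_of_nonneg_right hx_ge h4
    have h3 : (0:ℝ) ≤ x * (2 / (d ^ 2 * (d - 1))) := by positivity
    calc (1 - 4 / d) / d ^ 2 = (1 / d ^ 2) * (1 - 4 / d) := h1
      _ ≤ x * (1 - 4 / d) := h2'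
      _ ≤ x * (1 - 4 / d) + x * (2 / (d ^ 2 * (d - 1))) := by linarith
      _ = x * (1 - 4 / d + 2 / (d ^ 2 * (d - 1))) := by ring
  -- Step B : Bernoulli
  have hB : 1 + ((4:ℝ) * d - 4) * (-x) ≤ (1 + (-x)) ^ ((4:ℝ) * d - 4) :=
    one_add_mul_self_le_rpow_one_add (by linarith) (by linarith)
  have hB' : x * (1 + ((4:ℝ) * d - 4) * (-x)) ≤ x * (1 - x) ^ ((4:ℝ) * d - 4) := by
    have := mul_le_mul_of_nonneg_left hB hx0.le
    simpa [sub_eq_add_neg] using this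
  calc c ^ 2 / (1 + c) ^ 2 ≤ c ^ 2 := hA
    _ ≤ x * (1 + ((4:ℝ) * d - 4) * (-x)) := hC
    _ ≤ x * (1 - x) ^ ((4:ℝ) * d - 4) := hB'
end

section
/- Let G be a finite simple graph on n vertices with k connected components (k < n) and fix one vertex in each component. The number of functions f : V(G) → ℤ sending each fixed vertex to 0 and satisfying |f(x)-f(y)| ≤ h on every edge is, as a function of h, a polynomial in h of degree n - k with rational coefficients (for all integers h ≥ 0). -/
/-!
Write `f = (h + 1) * q + r` with `0 ≤ r ≤ h`. On an edge, `|f x - f y| ≤ h` holds iff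
`|q x - q y| ≤ 1` and `r x < r y` whenever `q x = q y + 1`. Hence `f` is the same as a rooted
`1`-Lipschitz function `q`, the order type `ρ` of `r` (a surjection onto `{0, …, m}` vanishing
on the roots and strictly increasing along the jumps of `q`), and the `m` nonzero values of `r`,
an arbitrary `m`-subset of `{1, …, h}`. So the count is `∑ₘ aₘ * C(h, m)` with `aₘ` the number of
pairs `(q, ρ)`. Since `ρ` sends all `k` roots to `0`, `aₘ = 0` for `m > n - k`, and `q = 0` with
`ρ` injective off the roots shows `aₙ₋ₖ > 0`.
-/

open Finset Function Polynomial

theorem sub_lt_iff_of_mul_add {N q₁ q₂ r₁ r₂ : ℤ} (hr₁ : 0 ≤ r₁) (hr₁N : r₁ < N)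
    (hr₂ : 0 ≤ r₂) (hr₂N : r₂ < N) :
    q₁ * N + r₁ - (q₂ * N + r₂) < N ↔ q₁ - q₂ ≤ 1 ∧ (q₁ = q₂ + 1 → r₁ < r₂) := by
  have hsub : q₁ * N + r₁ - (q₂ * N + r₂) = (q₁ - q₂) * N + (r₁ - r₂) := by ring
  rw [hsub]
  constructor
  · intro hlt
    have hle : q₁ - q₂ ≤ 1 := by
      by_contra! hgt
      nlinarith
    refine ⟨hle, fun hq => ?_⟩
    rw [hq, add_sub_cancel_left, one_mul] at hlt
    omega
  · rintro ⟨hle, hjump⟩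
    rcases hle.lt_or_eq with hlt | heq
    · nlinarith
    · rw [heq, one_mul]
      linarith [hjump (by omega)]

theorem sum_range_choose_mul_eq_of_eq_zero {s : ℕ → ℕ} {d : ℕ} (hs : ∀ m, d < m → s m = 0)
    (h : ℕ) :
    ∑ m ∈ range (h + 1), h.choose m * s m = ∑ m ∈ range (d + 1), h.choose m * s m := by
  calc ∑ m ∈ range (h + 1), h.choose m * s m
      = ∑ m ∈ range (h + d + 1), h.choose m * s m :=
        sum_subset (range_subset_range.2 (by omega)) fun m _ hm => by
          rw [mem_range, not_lt] at hm
          rw [Nat.choose_eq_zero_of_lt (by omega), zero_mul]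
    _ = ∑ m ∈ range (d + 1), h.choose m * s m :=
        (sum_subset (range_subset_range.2 (by omega)) fun m _ hm => by
          rw [mem_range, not_lt] at hm
          rw [hs m (by omega), mul_zero]).symm

theorem exists_natDegree_eq_eval_eq_sum_choose_mul {s : ℕ → ℕ} {d : ℕ}
    (hs : ∀ m, d < m → s m = 0) (hd : s d ≠ 0) :
    ∃ P : ℚ[X], P.natDegree = d ∧
      ∀ h : ℕ, P.eval (h : ℚ) = ((∑ m ∈ range (h + 1), h.choose m * s m : ℕ) : ℚ) := by
  set P : ℚ[X] := ∑ m ∈ range (d + 1), (s m / m.factorial : ℚ) • descPochhammer ℚ m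
  have hcoeff : ∀ m ∈ range (d + 1),
      ((s m / m.factorial : ℚ) • descPochhammer ℚ m).coeff d =
        if m = d then (s d / d.factorial : ℚ) else 0 := by
    intro m hm
    split_ifs with hmd
    · subst hmd
      have hlead := (monic_descPochhammer ℚ m).coeff_natDegree
      rw [descPochhammer_natDegree] at hlead
      rw [coeff_smul, hlead, smul_eq_mul, mul_one]
    · rw [coeff_smul, coeff_eq_zero_of_natDegree_lt, smul_zero]
      rw [descPochhammer_natDegree]
      exact lt_of_le_of_ne (Nat.lt_succ_iff.1 (mem_range.1 hm)) hmd
  refine ⟨P, natDegree_eq_of_le_of_coeff_ne_zero ?_ ?_, fun h => ?_⟩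
  · refine natDegree_sum_le_of_forall_le _ _ fun m hm => (natDegree_smul_le _ _).trans ?_
    rw [descPochhammer_natDegree]
    exact Nat.lt_succ_iff.1 (mem_range.1 hm)
  · rw [finsetSum_coeff, sum_congr rfl hcoeff, sum_ite_eq', if_pos (self_mem_range_succ d)]
    have : (s d : ℚ) ≠ 0 := by exact_mod_cast hd
    positivity
  · rw [sum_range_choose_mul_eq_of_eq_zero hs, eval_finsetSum]
    push_cast
    refine sum_congr rfl fun m _ => ?_
    rw [eval_smul, descPochhammer_eval_eq_descFactorial, Nat.descFactorial_eq_factorial_mul_choose,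
      smul_eq_mul]
    push_cast
    field_simp

def subtypeProdAndEquivSigma {α β : Type*} (A : α → Prop) (B : α → β → Prop) :
    {p : α × β // A p.1 ∧ B p.1 p.2} ≃ Σ a : {a // A a}, {b // B a b} where
  toFun p := ⟨⟨p.1.1, p.2.1⟩, p.1.2, p.2.2⟩
  invFun p := ⟨(p.1.1, p.2.1), p.1.2, p.2.2⟩
  left_inv _ := rfl
  right_inv _ := rfl

theorem card_subtype_prod_and {α β : Type*} (A : α → Prop) (B : α → β → Prop)
    [Fintype {a // A a}] [∀ a, Finite {b // B a b}] :
    Nat.card {p : α × β // A p.1 ∧ B p.1 p.2} = ∑ a : {a // A a}, Nat.card {b // B a b} := by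
  rw [Nat.card_congr (subtypeProdAndEquivSigma A B), Nat.card_sigma]

section Rooted

variable {V ι : Type*}

def IsRootedStrictMono {α : Type*} [Preorder α] [Zero α] (root : ι → V) (R : V → V → Prop)
    (r : V → α) : Prop :=
  (∀ i, r (root i) = 0) ∧ ∀ x y, R x y → r x < r y

section OrderType

variable (root : ι → V) (R : V → V → Prop)

theorem isRootedStrictMono_comp_iff {α β : Type*} [LinearOrder α] [Zero α] [LinearOrder β]
    [Zero β] (e : α ↪o β) (he : e 0 = 0) {ρ : V → α} :
    IsRootedStrictMono root R (e ∘ ρ) ↔ IsRootedStrictMono root R ρ := by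
  simp only [IsRootedStrictMono, comp_apply, ← he, e.injective.eq_iff, e.lt_iff_lt]

variable [Fintype V]

theorem card_isRootedStrictMono_image_eq {α : Type*} [LinearOrder α] [Zero α] {m : ℕ}
    (T : Finset α) (hT : T.card = m + 1) (h0 : 0 ∈ T) (hmin : ∀ t ∈ T, 0 ≤ t) :
    Nat.card {r : V → α // IsRootedStrictMono root R r ∧ univ.image r = T} =
      Nat.card {ρ : V → Fin (m + 1) // Surjective ρ ∧ IsRootedStrictMono root R ρ} := by
  set e := T.orderEmbOfFin hT
  have he : e 0 = 0 := (orderEmbOfFin_zero hT m.succ_pos).trans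
    (le_antisymm (min'_le T 0 h0) (hmin _ (min'_mem _ _)))
  have hcomp : ∀ ρ : V → Fin (m + 1), Surjective ρ → univ.image (e ∘ ρ) = T := fun ρ hρ => by
    rw [← image_image, image_univ_of_surjective hρ, image_orderEmbOfFin_univ]
  refine (Nat.card_congr (Equiv.ofBijective
    (fun ρ => ⟨e ∘ ρ.1, (isRootedStrictMono_comp_iff root R e he).2 ρ.2.2, hcomp ρ.1 ρ.2.1⟩)
    ⟨fun ρ σ hρσ => ?_, fun r => ?_⟩)).symm
  · exact Subtype.ext (funext fun v => e.injective (congrFun (congrArg Subtype.val hρσ) v))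
  · obtain ⟨r, hr, hrT⟩ := r
    have hmem : ∀ v, r v ∈ T := fun v => hrT ▸ mem_image_of_mem r (mem_univ v)
    set ρ : V → Fin (m + 1) := fun v => (T.orderIsoOfFin hT).symm ⟨r v, hmem v⟩
    have hρ : e ∘ ρ = r := funext fun v => by
      simp only [ρ, e, comp_apply, ← coe_orderIsoOfFin_apply, OrderIso.apply_symm_apply]
    have hsurj : Surjective ρ := fun i => by
      obtain ⟨v, -, hv⟩ :=
        mem_image.1 (hrT.symm ▸ T.orderEmbOfFin_mem hT i : e i ∈ univ.image r)
      exact ⟨v, e.injective ((congrFun hρ v).trans hv)⟩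
    refine ⟨⟨ρ, hsurj, (isRootedStrictMono_comp_iff root R e he).1 (hρ ▸ hr)⟩, ?_⟩
    exact Subtype.ext hρ

theorem card_isRootedStrictMono_eq_sum_choose [Nonempty ι] (h : ℕ) :
    Nat.card {r : V → Fin (h + 1) // IsRootedStrictMono root R r} =
      ∑ m ∈ range (h + 1), h.choose m *
        Nat.card {ρ : V → Fin (m + 1) // Surjective ρ ∧ IsRootedStrictMono root R ρ} := by
  classical
  set nonzeroValues : (V → Fin (h + 1)) → Finset (Fin (h + 1)) :=
    fun r => (univ.image r).erase 0
  have hfiber : ∀ S ∈ (univ.erase (0 : Fin (h + 1))).powerset,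
      #{r | IsRootedStrictMono root R r ∧ nonzeroValues r = S} =
        Nat.card {ρ : V → Fin (#S + 1) // Surjective ρ ∧ IsRootedStrictMono root R ρ} := by
    intro S hS
    have h0S : (0 : Fin (h + 1)) ∉ S := fun h0 => by simpa using mem_powerset.1 hS h0
    rw [← card_isRootedStrictMono_image_eq root R (insert 0 S) (card_insert_of_notMem h0S)
      (mem_insert_self 0 S) fun t _ => Fin.zero_le t, Nat.card_eq_fintype_card,
      Fintype.card_subtype]
    refine congrArg card (filter_congr fun r _ => and_congr_right fun hr => ?_)
    have h0 : (0 : Fin (h + 1)) ∈ univ.image r :=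
      mem_image.2 ⟨root (Classical.arbitrary ι), mem_univ _, hr.1 _⟩
    constructor
    · rintro rfl
      exact (insert_erase h0).symm
    · intro hrS
      simp only [nonzeroValues, hrS, erase_insert h0S]
  calc Nat.card {r : V → Fin (h + 1) // IsRootedStrictMono root R r}
      = ∑ S ∈ (univ.erase 0).powerset,
          #{r | IsRootedStrictMono root R r ∧ nonzeroValues r = S} := by
        rw [Nat.card_eq_fintype_card, Fintype.card_subtype,
          card_eq_sum_card_fiberwise fun r _ =>
            mem_powerset.2 (erase_subset_erase 0 (subset_univ (univ.image r)))]
        simp only [filter_filter, nonzeroValues]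
    _ = ∑ m ∈ range (h + 1), h.choose m *
        Nat.card {ρ : V → Fin (m + 1) // Surjective ρ ∧ IsRootedStrictMono root R ρ} := by
        rw [sum_congr rfl hfiber, sum_powerset_apply_card (fun m =>
          Nat.card {ρ : V → Fin (m + 1) // Surjective ρ ∧ IsRootedStrictMono root R ρ}),
          card_erase_of_mem (mem_univ _), card_univ, Fintype.card_fin, Nat.add_sub_cancel]
        rfl

variable {root}

theorem le_card_sub_card_of_surjective [Finite ι] (hinj : Injective root) {m : ℕ}
    {ρ : V → Fin (m + 1)} (hsurj : Surjective ρ) (hroot : ∀ i, ρ (root i) = 0) :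
    m ≤ Fintype.card V - Nat.card ι := by
  classical
  have := Fintype.ofFinite ι
  set Z := univ.image root
  have hcover : (univ : Finset (Fin (m + 1))) ⊆ insert 0 ((univ \ Z).image ρ) := fun j _ => by
    obtain ⟨v, rfl⟩ := hsurj j
    by_cases hv : v ∈ Z
    · obtain ⟨i, -, rfl⟩ := mem_image.1 hv
      exact hroot i ▸ mem_insert_self _ _
    · exact mem_insert_of_mem (mem_image_of_mem ρ (mem_sdiff.2 ⟨mem_univ v, hv⟩))
  have hcard := (card_le_card hcover).trans ((card_insert_le _ _).trans
    (Nat.add_le_add_right card_image_le 1))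
  rw [card_univ, Fintype.card_fin, card_sdiff_of_subset (subset_univ Z), card_univ,
    card_image_of_injective _ hinj, card_univ] at hcard
  rw [Nat.card_eq_fintype_card]
  omega

theorem exists_surjective_eq_zero_on_roots [Finite ι] [Nonempty ι] (hinj : Injective root) :
    ∃ ρ : V → Fin (Fintype.card V - Nat.card ι + 1), Surjective ρ ∧ ∀ i, ρ (root i) = 0 := by
  classical
  have := Fintype.ofFinite ι
  have hcard : Fintype.card {v // v ∉ Set.range root} = Fintype.card V - Nat.card ι := by
    rw [Fintype.card_subtype_compl, Set.card_range_of_injective hinj, Nat.card_eq_fintype_card]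
  set e := Fintype.equivFinOfCardEq hcard
  refine ⟨fun v => if hv : v ∈ Set.range root then 0 else (e ⟨v, hv⟩).succ,
    fun j => ?_, fun i => dif_pos ⟨i, rfl⟩⟩
  cases j using Fin.cases with
  | zero => exact ⟨root (Classical.arbitrary ι), dif_pos ⟨_, rfl⟩⟩
  | succ j => exact ⟨(e.symm j).1, by simp [(e.symm j).2]⟩

end OrderType

def IsRootedLipschitz (G : SimpleGraph V) (root : ι → V) (L : ℤ) (f : V → ℤ) : Prop :=
  (∀ i, f (root i) = 0) ∧ ∀ x y, G.Adj x y → f x - f y ≤ L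

def jumpRel (G : SimpleGraph V) (q : V → ℤ) (x y : V) : Prop :=
  G.Adj x y ∧ q x = q y + 1

section Lipschitz

variable {G : SimpleGraph V} {root : ι → V}

theorem isRootedLipschitz_iff_abs {L : ℤ} {f : V → ℤ} :
    IsRootedLipschitz G root L f ↔
      (∀ i, f (root i) = 0) ∧ ∀ x y, G.Adj x y → |f x - f y| ≤ L :=
  and_congr_right fun _ => ⟨fun hf x y hxy => abs_sub_le_iff.2 ⟨hf x y hxy, hf y x hxy.symm⟩,
    fun hf x y hxy => (le_abs_self _).trans (hf x y hxy)⟩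

theorem sub_le_mul_length {L : ℤ} {f : V → ℤ} (hf : ∀ x y, G.Adj x y → f x - f y ≤ L)
    {a b : V} (w : G.Walk a b) : f a - f b ≤ L * w.length := by
  induction w with
  | nil => simp
  | cons hadj w ih =>
    rw [SimpleGraph.Walk.length_cons]
    push_cast
    linarith [hf _ _ hadj]

theorem isRootedLipschitz_mul_add_iff {h : ℕ} (q : V → ℤ) (r : V → Fin (h + 1)) :
    IsRootedLipschitz G root h (fun v => q v * (h + 1 : ℕ) + (r v : ℕ)) ↔
      IsRootedLipschitz G root 1 q ∧ IsRootedStrictMono root (jumpRel G q) r := by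
  have hzero : ∀ v, q v * (h + 1 : ℕ) + (r v : ℕ) = 0 ↔ q v = 0 ∧ r v = 0 := fun v => by
    simpa [Int.divModEquiv_symm_apply] using
      (Int.divModEquiv (h + 1)).symm.injective.eq_iff (a := (q v, r v)) (b := (0, 0))
  have hedge : ∀ x y, q x * (h + 1 : ℕ) + (r x : ℕ) - (q y * (h + 1 : ℕ) + (r y : ℕ)) ≤ h ↔
      q x - q y ≤ 1 ∧ (q x = q y + 1 → r x < r y) := fun x y => by
    rw [← Int.lt_add_one_iff, ← Nat.cast_succ, sub_lt_iff_of_mul_add (by positivity)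
      (by exact_mod_cast (r x).2) (by positivity) (by exact_mod_cast (r y).2), Fin.lt_def,
      Nat.cast_lt]
  simp only [IsRootedLipschitz, IsRootedStrictMono, jumpRel, hzero, hedge, forall_and, and_imp]
  tauto

variable [Fintype V]

theorem finite_isRootedLipschitz (hreach : ∀ v, ∃ i, G.Reachable (root i) v) (L : ℤ) :
    Finite {f : V → ℤ // IsRootedLipschitz G root L f} := by
  choose i hi using hreach
  set len : V → ℤ := fun v => ((hi v).some.length : ℤ)
  have hbox : {f | IsRootedLipschitz G root L f} ⊆
      {f | ∀ v, f v ∈ Set.Icc (-(L * len v)) (L * len v)} := by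
    intro f hf v
    have hto := sub_le_mul_length hf.2 (hi v).some
    have hfrom := sub_le_mul_length hf.2 (hi v).some.reverse
    rw [SimpleGraph.Walk.length_reverse, hf.1] at hfrom
    rw [hf.1] at hto
    exact ⟨by linarith, by linarith⟩
  exact ((Set.Finite.pi' fun v => Set.finite_Icc _ _).subset hbox).to_subtype

noncomputable def numPatterns (G : SimpleGraph V) (root : ι → V) (m : ℕ) : ℕ :=
  Nat.card {p : (V → ℤ) × (V → Fin (m + 1)) //
    IsRootedLipschitz G root 1 p.1 ∧ Surjective p.2 ∧ IsRootedStrictMono root (jumpRel G p.1) p.2}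

theorem card_isRootedLipschitz_eq_sum [Nonempty ι]
    (hreach : ∀ v, ∃ i, G.Reachable (root i) v) (h : ℕ) :
    Nat.card {f : V → ℤ // IsRootedLipschitz G root h f} =
      ∑ m ∈ range (h + 1), h.choose m * numPatterns G root m := by
  have := finite_isRootedLipschitz hreach 1
  have := Fintype.ofFinite {q // IsRootedLipschitz G root 1 q}
  let divMod : (V → ℤ) × (V → Fin (h + 1)) ≃ (V → ℤ) :=
    (Equiv.arrowProdEquivProdArrow _ _ _).symm.trans
      (Equiv.piCongrRight fun _ => (Int.divModEquiv (h + 1)).symm)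
  rw [← Nat.card_congr
      (divMod.subtypeEquiv fun p => (isRootedLipschitz_mul_add_iff p.1 p.2).symm),
    card_subtype_prod_and _ fun q (r : V → Fin (h + 1)) =>
      IsRootedStrictMono root (jumpRel G q) r]
  simp_rw [card_isRootedStrictMono_eq_sum_choose]
  rw [sum_comm]
  refine sum_congr rfl fun m _ => ?_
  rw [← mul_sum, numPatterns, card_subtype_prod_and _ fun q (ρ : V → Fin (m + 1)) =>
    Surjective ρ ∧ IsRootedStrictMono root (jumpRel G q) ρ]

theorem numPatterns_eq_zero [Finite ι] (hinj : Injective root) {m : ℕ}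
    (hm : Fintype.card V - Nat.card ι < m) : numPatterns G root m = 0 :=
  Nat.card_eq_zero.2 <| Or.inl
    ⟨fun p => absurd hm (not_lt.2 (le_card_sub_card_of_surjective hinj p.2.2.1 p.2.2.2.1))⟩

theorem numPatterns_pos [Finite ι] [Nonempty ι] (hreach : ∀ v, ∃ i, G.Reachable (root i) v)
    (hinj : Injective root) : 0 < numPatterns G root (Fintype.card V - Nat.card ι) := by
  obtain ⟨ρ, hsurj, hρ⟩ := exists_surjective_eq_zero_on_roots (V := V) hinj
  have := finite_isRootedLipschitz hreach 1
  refine Nat.card_pos_iff.2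
    ⟨⟨⟨(0, ρ), ⟨fun _ => rfl, by simp⟩, hsurj, hρ, by simp [jumpRel]⟩⟩, ?_⟩
  exact Finite.of_equiv _ (subtypeProdAndEquivSigma (IsRootedLipschitz G root 1)
    fun q (ρ : V → Fin _) => Surjective ρ ∧ IsRootedStrictMono root (jumpRel G q) ρ).symm

end Lipschitz

end Rooted

theorem lipschitz_count_polynomial_general {V : Type*} [Fintype V]
    (G : SimpleGraph V) (root : G.ConnectedComponent → V)
    (hroot : ∀ c, G.connectedComponentMk (root c) = c)
    (hk : Nat.card G.ConnectedComponent < Fintype.card V) :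
    ∃ P : Polynomial ℚ,
      P.natDegree = Fintype.card V - Nat.card G.ConnectedComponent ∧
      ∀ h : ℕ,
        (Nat.card {f : V → ℤ // (∀ c, f (root c) = 0) ∧
            ∀ x y, G.Adj x y → |f x - f y| ≤ (h : ℤ)} : ℚ) = P.eval (h : ℚ) := by
  have : Nonempty V := Fintype.card_pos_iff.1 (by omega)
  have : Nonempty G.ConnectedComponent := ⟨G.connectedComponentMk (Classical.arbitrary V)⟩
  have hinj : Injective root := LeftInverse.injective hroot
  have hreach : ∀ v, ∃ c, G.Reachable (root c) v :=
    fun v => ⟨G.connectedComponentMk v, SimpleGraph.ConnectedComponent.exact (hroot _)⟩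
  obtain ⟨P, hdeg, heval⟩ := exists_natDegree_eq_eval_eq_sum_choose_mul
    (fun _ => numPatterns_eq_zero hinj) (numPatterns_pos hreach hinj).ne'
  refine ⟨P, hdeg, fun h => ?_⟩
  simp_rw [← isRootedLipschitz_iff_abs]
  rw [heval, card_isRootedLipschitz_eq_sum hreach]

theorem lipschitz_count_polynomial {V : Type*} [Fintype V] [DecidableEq V]
    (G : SimpleGraph V) (root : G.ConnectedComponent → V)
    (hroot : ∀ c, G.connectedComponentMk (root c) = c)
    (hk : Nat.card G.ConnectedComponent < Fintype.card V) :
    ∃ P : Polynomial ℚ,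
      P.natDegree = Fintype.card V - Nat.card G.ConnectedComponent ∧
      ∀ h : ℕ,
        (Nat.card {f : V → ℤ // (∀ c, f (root c) = 0) ∧
            ∀ x y, G.Adj x y → |f x - f y| ≤ (h : ℤ)} : ℚ) = P.eval (h : ℚ) :=
  lipschitz_count_polynomial_general G root hroot hk
end
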